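/- arXiv:1912.04886 — 5 statements merged into one kernel-verified Lean document; each statement's English description precedes it below -/
import Mathlib

section
/- Let q, k be coprime integers with k ≥ 1. Then the suborder subord_k(q) := ord_k(q) / ord_{rad(k)}(q) is an integer, equals ord_k(q^u) where u = ord_{rad(k)}(q), and divides k / rad(k). In particular every prime dividing subord_k(q) divides k. -/
/-- The radical of a natural number: the product of its distinct prime divisors. -/
def natRadical (k : ℕ) : ℕ := ∏ r ∈ k.primeFactors, r

lemma aux_binom (x : ℤ) (p : ℕ) : ∃ s : ℤ, (1+x)^p = 1 + p*x + x^2*s := by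
  induction p with
  | zero => exact ⟨0, by ring⟩
  | succ p ih =>
    obtain ⟨s, hs⟩ := ih
    exact ⟨p + s + x*s, by rw [pow_succ, hs]; push_cast; ring⟩

lemma aux_key {q m p n : ℕ} (hp : p ∣ m) (h : q ^ n ≡ 1 [MOD m]) :
    q ^ (n * p) ≡ 1 [MOD m * p] := by
  have h1 : (m : ℤ) ∣ (q : ℤ) ^ n - 1 := by
    have := (Nat.modEq_iff_dvd (n := m)).mp h
    push_cast at this ⊢
    exact dvd_sub_comm.mp this
  obtain ⟨t, ht⟩ := h1
  obtain ⟨s, hs⟩ := aux_binom ((m : ℤ) * t) p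
  have hq : (q : ℤ) ^ (n * p) = (1 + m * t) ^ p := by
    rw [pow_mul]; congr 1; linarith
  symm
  rw [Nat.modEq_iff_dvd]
  push_cast
  rw [hq, hs]
  obtain ⟨c, hc⟩ := hp
  exact ⟨t + c * (t^2 * s), by push_cast [hc]; ring⟩

lemma pow_order_modeq (q m : ℕ) : q ^ orderOf (q : ZMod m) ≡ 1 [MOD m] := by
  have := pow_orderOf_eq_one (q : ZMod m)
  rwa [← Nat.cast_pow, ← Nat.cast_one, ZMod.natCast_eq_natCast_iff] at this

lemma order_dvd_of_modeq {q m n : ℕ} (h : q ^ n ≡ 1 [MOD m]) :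
    orderOf (q : ZMod m) ∣ n := by
  apply orderOf_dvd_of_pow_eq_one
  rw [← Nat.cast_pow, ← Nat.cast_one, ZMod.natCast_eq_natCast_iff]
  exact h

lemma radical_dvd (k : ℕ) : natRadical k ∣ k := Nat.prod_primeFactors_dvd k

lemma main_ind (q : ℕ) : ∀ k, 1 ≤ k → Nat.Coprime q k →
    orderOf (q : ZMod k) ∣ (k / natRadical k) * orderOf (q : ZMod (natRadical k)) := by
  intro k
  induction k using Nat.strong_induction_on with
  | _ k ih =>
    intro hk hqk
    by_cases hsq : Squarefree k
    · have hr : natRadical k = k := Nat.prod_primeFactors_of_squarefree hsq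
      rw [hr, Nat.div_self (by omega), one_mul]
    · obtain ⟨p, hp, hpk⟩ := by
        simpa [Nat.squarefree_iff_prime_squarefree] using hsq
      have hk0 : k ≠ 0 := by omega
      set m := k / p with hm
      have hpk' : p ∣ k := dvd_trans (dvd_mul_left p p) hpk
      have hkm : k = m * p := (Nat.div_mul_cancel hpk').symm
      have hpm : p ∣ m := by
        have : p * p ∣ m * p := hkm ▸ hpk
        exact (mul_dvd_mul_iff_right hp.pos.ne').mp this
      have hm0 : m ≠ 0 := by rintro h; rw [h] at hkm; omega
      have hmk : m < k := by
        rw [hkm]; exact lt_mul_of_one_lt_right (Nat.pos_of_ne_zero hm0) hp.one_lt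
      have hrad : natRadical m = natRadical k := by
        unfold natRadical
        congr 1
        rw [hkm, Nat.primeFactors_mul hm0 hp.pos.ne']
        rw [hp.primeFactors]
        exact (Finset.union_eq_left.mpr (by
          simpa using Nat.mem_primeFactors.mpr ⟨hp, hpm, hm0⟩)).symm
      have hqm : Nat.Coprime q m := hqk.coprime_dvd_right ⟨p, hkm⟩
      have IH := ih m hmk (Nat.pos_of_ne_zero hm0) hqm
      -- orderOf (q : ZMod k) ∣ orderOf (q : ZMod m) * p
      have h1 : orderOf (q : ZMod k) ∣ orderOf (q : ZMod m) * p := by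
        have := aux_key hpm (pow_order_modeq q m)
        rw [← hkm] at this
        exact order_dvd_of_modeq this
      have hdiv : k / natRadical k = (m / natRadical m) * p := by
        rw [← hrad, hkm, mul_comm m p, Nat.mul_div_assoc p (radical_dvd m), mul_comm]
    
      calc orderOf (q : ZMod k) ∣ orderOf (q : ZMod m) * p := h1
        _ ∣ ((m / natRadical m) * orderOf (q : ZMod (natRadical m))) * p :=
          mul_dvd_mul_right IH p
        _ = (k / natRadical k) * orderOf (q : ZMod (natRadical k)) := by
          rw [hdiv, hrad]; ring

lemma order_pos {n q : ℕ} (h : Nat.Coprime q n) (hn : n ≠ 0) : 0 < orderOf (q : ZMod n) := by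
  haveI : NeZero n := ⟨hn⟩
  have : (q : ZMod n) = ((ZMod.unitOfCoprime q h : (ZMod n)ˣ) : ZMod n) := by
    simp [ZMod.coe_unitOfCoprime]
  rw [this, orderOf_units]
  exact orderOf_pos _

/-- Let `q, k` be coprime with `k ≥ 1`. Then the suborder
`subord_k(q) = ord_k(q) / ord_{rad(k)}(q)` is an integer (i.e. `ord_{rad k}(q)`
divides `ord_k(q)`), equals `ord_k(q^u)` where `u = ord_{rad k}(q)`, divides
`k / rad(k)`, and every prime dividing it divides `k`. -/
theorem stmt_3 (q k : ℕ) (hk : 1 ≤ k) (hqk : Nat.Coprime q k) :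
    orderOf ((q : ZMod (natRadical k))) ∣ orderOf ((q : ZMod k)) ∧
    orderOf ((q : ZMod k)) / orderOf ((q : ZMod (natRadical k)))
      = orderOf (((q : ZMod k)) ^ orderOf ((q : ZMod (natRadical k)))) ∧
    orderOf ((q : ZMod k)) / orderOf ((q : ZMod (natRadical k))) ∣ k / natRadical k ∧
    ∀ r : ℕ, r.Prime →
      r ∣ orderOf ((q : ZMod k)) / orderOf ((q : ZMod (natRadical k))) → r ∣ k := by
  have hrd := radical_dvd k
  have hr0 : natRadical k ≠ 0 := fun h0 => by
    rw [h0] at hrd; omega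
  have hqr : Nat.Coprime q (natRadical k) := hqk.coprime_dvd_right hrd
  have hu : 0 < orderOf ((q : ZMod (natRadical k))) := order_pos hqr hr0
  have h1 : orderOf ((q : ZMod (natRadical k))) ∣ orderOf ((q : ZMod k)) := by
    exact order_dvd_of_modeq ((pow_order_modeq q k).of_dvd hrd)
  refine ⟨h1, ?_, ?_, ?_⟩
  · rw [orderOf_pow' _ hu.ne', Nat.gcd_eq_right h1]
  · obtain ⟨s, hs⟩ := h1
    have h2 := main_ind q k hk hqk
    rw [hs, Nat.mul_div_cancel_left _ hu]
    rw [hs, mul_comm (k / natRadical k)] at h2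
    exact (mul_dvd_mul_iff_left hu.ne').mp h2
  · intro r _ hrdvd
    obtain ⟨s, hs⟩ := h1
    have h2 := main_ind q k hk hqk
    rw [hs, Nat.mul_div_cancel_left _ hu] at hrdvd
    rw [hs, mul_comm (k / natRadical k)] at h2
    have : s ∣ k / natRadical k := (mul_dvd_mul_iff_left hu.ne').mp h2
    exact (hrdvd.trans this).trans (Nat.div_dvd_of_dvd hrd)
end

section
/- If (q, n) is a regular pair, i.e. gcd(n, ord_{rad(n')}(q)) = 1 where n' is the part of n coprime to the characteristic, then for any divisor k = 2^j · ℓ of n' with ℓ odd, one has ord_k(q) = ord_{2^j}(q) · ord_ℓ(q). -/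
lemma key_int {m : ℕ} (hm : m ≠ 0) {y : ℤ} (h : (natRadical m : ℤ) ∣ y - 1) :
    (m : ℤ) ∣ y ^ m - 1 := by
  have hmn : m = ∏ p ∈ m.primeFactors, p ^ m.factorization p := by
    conv_lhs => rw [← Nat.factorization_prod_pow_eq_self hm]
    rfl
  have hm' : (m : ℤ) = ∏ p ∈ m.primeFactors, (p : ℤ) ^ m.factorization p := by
    have := congrArg (Nat.cast : ℕ → ℤ) hmn
    push_cast at this
    exact this
  rw [hm']
  apply Finset.prod_dvd_of_coprime
  · intro a ha b hb hab
    have ha' := (Nat.mem_primeFactors.mp ha).1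
    have hb' := (Nat.mem_primeFactors.mp hb).1
    have : Nat.Coprime (a ^ m.factorization a) (b ^ m.factorization b) :=
      Nat.Coprime.pow _ _ ((Nat.coprime_primes ha' hb').mpr hab)
    simpa [Function.onFun] using (Nat.isCoprime_iff_coprime.mpr this)
  · intro p hp
    have hpp := (Nat.mem_primeFactors.mp hp).1
    have hpd : (p : ℤ) ∣ y - 1 := by
      refine dvd_trans ?_ h
      exact_mod_cast Int.natCast_dvd_natCast.mpr (Finset.dvd_prod_of_mem _ hp)
    set e := m.factorization p with he
    have he1 : 1 ≤ e := (Nat.Prime.factorization_pos_of_dvd hpp hm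
      (Nat.mem_primeFactors.mp hp).2.1)
    have h1 : ((p : ℤ)) ^ ((e - 1) + 1) ∣ y ^ (p ^ (e - 1)) - 1 ^ (p ^ (e - 1)) :=
      dvd_sub_pow_of_dvd_sub hpd (e - 1)
    rw [one_pow, Nat.sub_add_cancel he1] at h1
    have h2 : p ^ (e - 1) ∣ m :=
      dvd_trans (pow_dvd_pow p (Nat.sub_le e 1)) (Nat.ordProj_dvd m p)
    obtain ⟨c, hc⟩ := h2
    calc (p:ℤ) ^ e ∣ y ^ (p ^ (e - 1)) - 1 := h1
      _ ∣ y ^ m - 1 := by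
          rw [hc, pow_mul]
          simpa using sub_dvd_pow_sub_pow (y ^ (p ^ (e - 1))) 1 c

lemma orderOf_zmod_dvd_mul {q m t : ℕ} (hm : m ≠ 0)
    (h : ((q : ZMod (natRadical m))) ^ t = 1) : orderOf (q : ZMod m) ∣ m * t := by
  have h1 : (q : ℕ) ^ t ≡ 1 [MOD natRadical m] := by
    rw [← ZMod.natCast_eq_natCast_iff]
    push_cast
    simpa using h
  have h2 : (natRadical m : ℤ) ∣ (q : ℤ) ^ t - 1 := by
    have := (Nat.modEq_iff_dvd.mp h1.symm)
    push_cast at this ⊢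
    exact this
  have h3 : (m : ℤ) ∣ ((q : ℤ) ^ t) ^ m - 1 := key_int hm h2
  have h3' : (m : ℤ) ∣ (q : ℤ) ^ (t * m) - 1 := by rw [pow_mul]; exact h3
  have h4 : (q : ℕ) ^ (t * m) ≡ 1 [MOD m] := by
    rw [Nat.modEq_iff_dvd]
    push_cast
    exact dvd_sub_comm.mp h3'
  have h5 : ((q : ZMod m)) ^ (t * m) = 1 := by
    have := (ZMod.natCast_eq_natCast_iff _ _ _).mpr h4
    push_cast at this
    simpa using this
  rw [mul_comm]
  exact orderOf_dvd_of_pow_eq_one h5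


/-- If `(q, n)` is a regular pair, i.e. `gcd(n, ord_{rad(n')}(q)) = 1` where
`n = p^a n'` with `p ∤ n'` and `q` a power of the prime `p`, then for any divisor
`k = 2^j · ℓ` of `n'` with `ℓ` odd, `ord_k(q) = ord_{2^j}(q) · ord_ℓ(q)`. -/
theorem stmt_6 (p s q a n n' : ℕ) (hp : p.Prime) (hq : q = p ^ s) (hs : 1 ≤ s)
    (hn : n = p ^ a * n') (hpn' : ¬ p ∣ n')
    (hreg : Nat.Coprime n (orderOf ((q : ZMod (natRadical n')))))
    (j ℓ k : ℕ) (hℓ : Odd ℓ) (hk : k = 2 ^ j * ℓ) (hkn' : k ∣ n') :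
    orderOf ((q : ZMod k))
      = orderOf ((q : ZMod (2 ^ j))) * orderOf ((q : ZMod ℓ)) := by
  subst hk
  have hn'0 : n' ≠ 0 := by rintro rfl; exact hpn' (dvd_zero p)
  have hℓn' : ℓ ∣ n' := (dvd_mul_left ℓ (2 ^ j)).trans hkn'
  have h2jn' : 2 ^ j ∣ n' := (dvd_mul_right (2 ^ j) ℓ).trans hkn'
  have cop : Nat.Coprime (2 ^ j) ℓ := Nat.Coprime.pow_left j (hℓ.coprime_two_left)
  -- CRT
  have e := ZMod.chineseRemainder cop
  have hmap : e (q : ZMod (2 ^ j * ℓ)) = ((q : ZMod (2 ^ j)), (q : ZMod ℓ)) := by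
    have := map_natCast (e : ZMod (2 ^ j * ℓ) →+* ZMod (2 ^ j) × ZMod ℓ) q
    simpa [Prod.ext_iff] using this
  have hord : orderOf (q : ZMod (2 ^ j * ℓ))
      = Nat.lcm (orderOf (q : ZMod (2 ^ j))) (orderOf (q : ZMod ℓ)) := by
    rw [← e.toMulEquiv.orderOf_eq (q : ZMod (2 ^ j * ℓ))]
    simp only [RingEquiv.toMulEquiv_eq_coe, RingEquiv.coe_toMulEquiv]
    rw [hmap, Prod.orderOf_mk]
  rw [hord]
  -- coprimality of the two orders
  rcases Nat.eq_zero_or_pos j with rfl | hj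
  · have hsub : Subsingleton (ZMod (2 ^ 0)) := by rw [pow_zero]; infer_instance
    have h1 : (q : ZMod (2 ^ 0)) = 1 := Subsingleton.elim _ _
    rw [h1, orderOf_one]
    simp [Nat.lcm]
  · -- j ≥ 1 : 2 ∣ n
    have h2n' : 2 ∣ n' := (dvd_pow_self 2 hj.ne').trans h2jn'
    have hp2 : p ≠ 2 := by rintro rfl; exact hpn' h2n'
    set t := orderOf (q : ZMod (natRadical n')) with ht
    have htodd : ¬ 2 ∣ t := by
      intro h2t
      have h2n : 2 ∣ n := hn ▸ Dvd.dvd.mul_left h2n' (p ^ a)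
      have := Nat.eq_one_of_dvd_coprimes hreg h2n h2t
      omega
    -- order mod ℓ is odd
    have hℓ0 : ℓ ≠ 0 := by rintro rfl; exact (Nat.not_odd_iff_even.mpr Even.zero) hℓ
    have hraddvd : natRadical ℓ ∣ natRadical n' :=
      Finset.prod_dvd_prod_of_subset _ _ _ (Nat.primeFactors_mono hℓn' hn'0)
    have hqt : ((q : ZMod (natRadical ℓ))) ^ t = 1 := by
      have h0 := pow_orderOf_eq_one (q : ZMod (natRadical n'))
      have := congrArg (ZMod.castHom hraddvd (ZMod (natRadical ℓ))) h0
      rw [map_pow, map_natCast, map_one] at this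
      exact this
    have hordℓ : orderOf (q : ZMod ℓ) ∣ ℓ * t := orderOf_zmod_dvd_mul hℓ0 hqt
    have hordℓodd : ¬ 2 ∣ orderOf (q : ZMod ℓ) := by
      intro h2
      rcases (Nat.Prime.dvd_mul Nat.prime_two).mp (h2.trans hordℓ) with h | h
      · exact (Nat.not_odd_iff_even.mpr (even_iff_two_dvd.mpr h)) hℓ
      · exact htodd h
    -- order mod 2^j divides 2^(j-1)
    have hqcop : Nat.Coprime q (2 ^ j) :=
      hq ▸ Nat.Coprime.pow (s) (j) ((Nat.coprime_primes hp Nat.prime_two).mpr hp2)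
    have hpow : ((q : ZMod (2 ^ j))) ^ Nat.totient (2 ^ j) = 1 := by
      have := (ZMod.natCast_eq_natCast_iff _ _ _).mpr (Nat.ModEq.pow_totient hqcop)
      push_cast at this
      simpa using this
    have hord2 : orderOf (q : ZMod (2 ^ j)) ∣ 2 ^ (j - 1) := by
      have := orderOf_dvd_of_pow_eq_one hpow
      rwa [Nat.totient_prime_pow Nat.prime_two hj, Nat.mul_one] at this
    have hcop : Nat.Coprime (orderOf (q : ZMod (2 ^ j))) (orderOf (q : ZMod ℓ)) :=
      Nat.Coprime.coprime_dvd_left hord2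
        (Nat.Coprime.pow_left _ ((Nat.Prime.coprime_iff_not_dvd Nat.prime_two).mpr hordℓodd))
    exact hcop.lcm_eq_mul
end

section
/- Let q be a prime power and k a positive integer coprime to q, and write subord_k(q) = ∏_{r | k prime} r^{α(r)}. Define τ_k := ∏_{r | k prime} r^{⌊α(r)/2⌋}. Then τ_k divides k / rad(k) and τ_k^2 divides ord_k(q), and ord_{k/τ_k}(q^{τ_k}) = ord_k(q) / τ_k^2. -/
/-- The suborder `subord_k(q) = ord_k(q) / ord_{rad k}(q)`. -/
noncomputable def subord (q k : ℕ) : ℕ :=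
  orderOf ((q : ZMod k)) / orderOf ((q : ZMod (natRadical k)))

/-- The central index `τ_k = ∏_{r | k prime} r^{⌊α(r)/2⌋}`, where
`subord_k(q) = ∏ r^{α(r)}`. -/
noncomputable def centralIndex (q k : ℕ) : ℕ :=
  ∏ r ∈ k.primeFactors, r ^ ((subord q k).factorization r / 2)

/-!
Let `D = ord_{rad k}(q)`, so that every prime `r ∣ k` divides `q ^ D - 1`. Lifting the exponent,
`v_r(q ^ (D n) - 1) = v_r(q ^ D - 1) + v_r(n)`, with `≥` in place of `=` in the exceptional case
`r = 2`, `n` even, `q ^ D ≡ 3 (mod 4)`. This gives `subord_k(q) ∣ k / rad k`, and, for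
`t ∣ subord_k(q)` with `subord_k(q) / t` even whenever `t` is, `ord_{k/t}(q) = ord_k(q) / t`.
The central index satisfies `τ_k² ∣ subord_k(q)`, so `t = τ_k` qualifies and
`τ_k ∣ ord_{k/τ_k}(q)`, whence
`ord_{k/τ_k}(q ^ τ_k) = ord_{k/τ_k}(q) / τ_k = ord_k(q) / τ_k²`.
-/

open Finset

section LiftingTheExponent

variable {r b n : ℕ}

lemma factorization_pow_sub_one_of_not_dvd (hb : 1 < b) (hrb : r ∣ b - 1)
    (hrn : ¬ r ∣ n) : (b ^ n - 1).factorization r = (b - 1).factorization r := by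
  have hgeom : ¬ r ∣ ∑ i ∈ range n, b ^ i := by
    have hb1 : (b : ZMod r) = 1 := by
      rw [← sub_eq_zero, ← Nat.cast_one, ← Nat.cast_sub hb.le, ZMod.natCast_eq_zero_iff]
      exact hrb
    rw [← ZMod.natCast_eq_zero_iff] at hrn ⊢
    simpa [hb1] using hrn
  have hgeom0 : ∑ i ∈ range n, b ^ i ≠ 0 := fun h => hgeom (h ▸ dvd_zero r)
  rw [← geom_sum_mul_of_one_le hb.le, Nat.factorization_mul hgeom0 (by omega), Finsupp.add_apply,
    Nat.factorization_eq_zero_of_not_dvd hgeom, zero_add]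

lemma factorization_pow_sub_one (hr : r.Prime) (hb : 1 < b) (hn : n ≠ 0) (hrb : r ∣ b - 1)
    (h2 : r = 2 → 2 ∣ n → 4 ∣ b - 1) :
    (b ^ n - 1).factorization r = (b - 1).factorization r + n.factorization r := by
  have : Fact r.Prime := ⟨hr⟩
  have hrb' : ¬ r ∣ b := fun h =>
    hr.not_dvd_one (by simpa [Nat.sub_sub_self hb.le] using Nat.dvd_sub h hrb)
  rcases eq_or_ne r 2 with rfl | hr2
  · by_cases hn2 : 2 ∣ n
    · have h4 := h2 rfl hn2
      -- `b + 1 ≡ 2 [MOD 4]`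
      have hb1 : padicValNat 2 (b + 1) = 1 := by
        have hlo : 2 ^ 1 ∣ b + 1 := by omega
        have hhi : ¬ 2 ^ 2 ∣ b + 1 := by omega
        rw [padicValNat_dvd_iff_le (by omega)] at hlo hhi
        omega
      have := padicValNat.pow_two_sub_one hb hrb' hn (even_iff_two_dvd.mpr hn2)
      simp only [Nat.factorization_def _ hr]
      omega
    · rw [factorization_pow_sub_one_of_not_dvd hb hrb hn2,
        Nat.factorization_eq_zero_of_not_dvd hn2, add_zero]
  · simpa [Nat.factorization_def _ hr] using
      padicValNat.pow_sub_pow (hr.odd_of_ne_two hr2) hb (by simpa using hrb) hrb' hn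

lemma factorization_pow_sub_one_ge (hr : r.Prime) (hb : 1 < b) (hn : n ≠ 0) (hrb : r ∣ b - 1) :
    (b - 1).factorization r + n.factorization r ≤ (b ^ n - 1).factorization r := by
  by_cases h : r = 2 ∧ 2 ∣ n
  · obtain ⟨rfl, hn2⟩ := h
    have : Fact (Nat.Prime 2) := ⟨Nat.prime_two⟩
    have hb1 : 1 ≤ padicValNat 2 (b + 1) :=
      one_le_padicValNat_of_dvd (by omega) (by omega)
    have := padicValNat.pow_two_sub_one hb (by omega) hn (even_iff_two_dvd.mpr hn2)
    simp only [Nat.factorization_def _ hr]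
    omega
  · exact (factorization_pow_sub_one hr hb hn hrb fun hr2 hn2 => (h ⟨hr2, hn2⟩).elim).ge

end LiftingTheExponent

section PowSubOne

variable {b m t : ℕ}

lemma mul_dvd_pow_sub_one (hb : 1 < b) (ht : t ≠ 0) (hm : m ∣ b - 1)
    (hprime : ∀ r, r.Prime → r ∣ t → r ∣ m) : m * t ∣ b ^ t - 1 := by
  have hb0 : b - 1 ≠ 0 := by omega
  have hm0 : m ≠ 0 := ne_zero_of_dvd_ne_zero hb0 hm
  have hbt0 : b ^ t - 1 ≠ 0 := by have := Nat.one_lt_pow ht hb; omega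
  have hm_le : ∀ r, m.factorization r ≤ (b - 1).factorization r :=
    (Nat.factorization_le_iff_dvd hm0 hb0).mpr hm
  rw [← Nat.factorization_prime_le_iff_dvd (mul_ne_zero hm0 ht) hbt0]
  intro r hr
  rw [Nat.factorization_mul hm0 ht, Finsupp.add_apply]
  by_cases hrt : r ∣ t
  · have := factorization_pow_sub_one_ge hr hb ht ((hprime r hr hrt).trans hm)
    have := hm_le r
    omega
  · have hsub : b - 1 ∣ b ^ t - 1 := by simpa using Nat.sub_dvd_pow_sub_pow b 1 t
    have := (Nat.factorization_le_iff_dvd hb0 hbt0).mpr hsub r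
    have := hm_le r
    rw [Nat.factorization_eq_zero_of_not_dvd hrt]
    omega

lemma dvd_sub_one_of_mul_dvd_pow_sub_one (hb : 1 < b) (ht : t ≠ 0) (h : m * t ∣ b ^ t - 1)
    (hprime : ∀ r, r.Prime → r ∣ m → r ∣ b - 1) (h2 : 2 ∣ t → 4 ∣ b - 1) :
    m ∣ b - 1 := by
  have hb0 : b - 1 ≠ 0 := by omega
  have hbt0 : b ^ t - 1 ≠ 0 := by have := Nat.one_lt_pow ht hb; omega
  have hm0 : m ≠ 0 := fun hm => hbt0 (zero_dvd_iff.mp (by simpa [hm] using h))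
  rw [← Nat.factorization_prime_le_iff_dvd hm0 hb0]
  intro r hr
  by_cases hrm : r ∣ m
  · have hle := (Nat.factorization_le_iff_dvd (mul_ne_zero hm0 ht) hbt0).mpr h r
    rw [Nat.factorization_mul hm0 ht, Finsupp.add_apply,
      factorization_pow_sub_one hr hb ht (hprime r hr hrm) fun _ => h2] at hle
    omega
  · simp [Nat.factorization_eq_zero_of_not_dvd hrm]

lemma four_dvd_pow_sub_one_of_even {n : ℕ} (hb : Odd b) (hn : Even n) : 4 ∣ b ^ n - 1 := by
  obtain ⟨m, rfl⟩ := hn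
  rw [← two_mul, pow_mul']
  exact (by norm_num : 4 ∣ 8).trans (Nat.eight_dvd_sq_sub_one_of_odd hb.pow)

end PowSubOne

section MultiplicativeOrder

variable {q k m n : ℕ}

lemma orderOf_natCast_dvd_iff (hq : q ≠ 0) (x : ℕ) :
    orderOf (q : ZMod n) ∣ x ↔ n ∣ q ^ x - 1 := by
  rw [orderOf_dvd_iff_pow_eq_one, ← ZMod.natCast_eq_zero_iff,
    Nat.cast_sub (Nat.one_le_pow _ _ (Nat.pos_of_ne_zero hq)), sub_eq_zero]
  push_cast
  rfl

lemma orderOf_natCast_pos (hn : n ≠ 0) (hqn : q.Coprime n) : 0 < orderOf (q : ZMod n) := by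
  have : NeZero n := ⟨hn⟩
  rw [← ZMod.coe_unitOfCoprime q hqn, orderOf_units]
  exact orderOf_pos _

lemma orderOf_natCast_dvd_of_dvd (hmn : m ∣ n) :
    orderOf (q : ZMod m) ∣ orderOf (q : ZMod n) := by
  simpa using orderOf_map_dvd (ZMod.castHom hmn (ZMod m)).toMonoidHom (q : ZMod n)

end MultiplicativeOrder

lemma sq_prod_pow_factorization_div_two_dvd {n : ℕ} {s : Finset ℕ} (hn : n ≠ 0)
    (hs : n.primeFactors ⊆ s) : (∏ r ∈ s, r ^ (n.factorization r / 2)) ^ 2 ∣ n := by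
  have hprod : ∏ r ∈ s, r ^ n.factorization r = n := by
    rw [← Finsupp.prod_of_support_subset _ (by rwa [Nat.support_factorization]) _
      fun _ _ => pow_zero _, Nat.prod_factorization_pow_eq_self hn]
  conv_rhs => rw [← hprod]
  rw [← prod_pow]
  exact prod_dvd_prod_of_dvd _ _ fun r _ => by
    rw [← pow_mul]
    exact pow_dvd_pow r (Nat.div_mul_le_self _ 2)

lemma dvd_natRadical {r k : ℕ} (hr : r.Prime) (hrk : r ∣ k) (hk : k ≠ 0) :
    r ∣ natRadical k :=
  dvd_prod_of_mem _ (Nat.mem_primeFactors.mpr ⟨hr, hrk, hk⟩)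

section Suborder

variable {q k t : ℕ}

lemma Nat.Coprime.ne_zero_right_of_one_lt (hq : 1 < q) (hqk : q.Coprime k) : k ≠ 0 := by
  rintro rfl
  rw [Nat.coprime_zero_right] at hqk
  omega

lemma subord_mul_orderOf_natRadical (q k : ℕ) :
    subord q k * orderOf (q : ZMod (natRadical k)) = orderOf (q : ZMod k) :=
  Nat.div_mul_cancel (orderOf_natCast_dvd_of_dvd (Nat.prod_primeFactors_dvd k))

lemma subord_ne_zero (hq : 1 < q) (hqk : q.Coprime k) : subord q k ≠ 0 := by
  intro h
  have := orderOf_natCast_pos (hqk.ne_zero_right_of_one_lt hq) hqk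
  rw [← subord_mul_orderOf_natRadical, h, zero_mul] at this
  exact this.false

lemma subord_dvd_div_natRadical (hq : 1 < q) (hqk : q.Coprime k) :
    subord q k ∣ k / natRadical k := by
  have hk := hqk.ne_zero_right_of_one_lt hq
  have hR : natRadical k ∣ k := Nat.prod_primeFactors_dvd k
  have hR0 : natRadical k ≠ 0 := ne_zero_of_dvd_ne_zero hk hR
  have hD := orderOf_natCast_pos hR0 (hqk.coprime_dvd_right hR)
  have hkR : k / natRadical k ≠ 0 :=
    (Nat.div_pos (Nat.le_of_dvd (Nat.pos_of_ne_zero hk) hR) (Nat.pos_of_ne_zero hR0)).ne'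
  rw [subord, Nat.div_dvd_iff_dvd_mul (orderOf_natCast_dvd_of_dvd hR) hD,
    orderOf_natCast_dvd_iff (by omega), pow_mul]
  have := mul_dvd_pow_sub_one (Nat.one_lt_pow hD.ne' hq) hkR
    ((orderOf_natCast_dvd_iff (by omega) _).mp dvd_rfl)
    fun r hr hrt => dvd_natRadical hr (hrt.trans (Nat.div_dvd_of_dvd hR)) hk
  rwa [Nat.mul_div_cancel' hR] at this

lemma centralIndex_sq_dvd_subord (hq : 1 < q) (hqk : q.Coprime k) :
    centralIndex q k ^ 2 ∣ subord q k :=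
  sq_prod_pow_factorization_div_two_dvd (subord_ne_zero hq hqk) <|
    Nat.primeFactors_mono ((subord_dvd_div_natRadical hq hqk).trans (Nat.div_dvd_of_dvd
      (Nat.prod_primeFactors_dvd k))) (hqk.ne_zero_right_of_one_lt hq)

lemma orderOf_natCast_div_of_dvd_subord (hq : 1 < q) (hqk : q.Coprime k) (ht : t ∣ subord q k)
    (h2 : 2 ∣ t → 2 ∣ subord q k / t) :
    orderOf (q : ZMod (k / t)) = orderOf (q : ZMod k) / t := by
  have hk := hqk.ne_zero_right_of_one_lt hq
  have hq0 : q ≠ 0 := by omega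
  set D := orderOf (q : ZMod (natRadical k))
  obtain ⟨c, hc⟩ := ht
  have hN : orderOf (q : ZMod k) = t * (c * D) := by
    rw [← subord_mul_orderOf_natRadical, hc, mul_assoc]
  have htc0 : t * (c * D) ≠ 0 := hN ▸ (orderOf_natCast_pos hk hqk).ne'
  have ht0 : t ≠ 0 := left_ne_zero_of_mul htc0
  have htR : natRadical k * t ∣ k :=
    Nat.mul_dvd_of_dvd_div (Nat.prod_primeFactors_dvd k)
      (hc ▸ dvd_mul_right t c |>.trans (subord_dvd_div_natRadical hq hqk))
  have hmt : k / t * t = k := Nat.div_mul_cancel (dvd_of_mul_left_dvd htR)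
  have hmk : k / t ∣ k := Nat.div_dvd_of_dvd (dvd_of_mul_left_dvd htR)
  have hRm : natRadical k ∣ k / t := Nat.dvd_div_of_mul_dvd (by rwa [mul_comm])
  rw [hN, Nat.mul_div_cancel_left _ (Nat.pos_of_ne_zero ht0)]
  apply Nat.dvd_antisymm
  · rw [orderOf_natCast_dvd_iff hq0]
    refine dvd_sub_one_of_mul_dvd_pow_sub_one (Nat.one_lt_pow (right_ne_zero_of_mul htc0) hq) ht0
      ?_ (fun r hr hrm => ?_) fun h2t => ?_
    · rw [← pow_mul, mul_comm (c * D) t, ← hN, hmt]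
      exact (orderOf_natCast_dvd_iff hq0 _).mp dvd_rfl
    · exact (dvd_natRadical hr (hrm.trans hmk) hk).trans
        ((orderOf_natCast_dvd_iff hq0 _).mp (dvd_mul_left D c))
    · have hc2 : 2 ∣ c := by
        simpa [hc, Nat.mul_div_cancel_left _ (Nat.pos_of_ne_zero ht0)] using h2 h2t
      have hqodd : Odd q := Nat.Coprime.odd_of_right
        (hqk.coprime_dvd_right (h2t.trans (dvd_of_mul_left_dvd htR)))
      exact four_dvd_pow_sub_one_of_even hqodd ((even_iff_two_dvd.mpr hc2).mul_right D)
  · have hM := orderOf_natCast_pos (ne_zero_of_dvd_ne_zero hk hmk) (hqk.coprime_dvd_right hmk)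
    rw [← Nat.mul_dvd_mul_iff_left (Nat.pos_of_ne_zero ht0), ← hN, orderOf_natCast_dvd_iff hq0,
      mul_comm, pow_mul]
    conv_lhs => rw [← hmt]
    exact mul_dvd_pow_sub_one (Nat.one_lt_pow hM.ne' hq) ht0
      ((orderOf_natCast_dvd_iff hq0 _).mp dvd_rfl)
      fun r hr hrt => (dvd_natRadical hr (hrt.trans (dvd_of_mul_left_dvd htR)) hk).trans hRm

end Suborder

theorem stmt_7_general (p s q k : ℕ) (hp : p.Prime) (hq : q = p ^ s) (hs : 1 ≤ s)
    (hqk : Nat.Coprime q k) :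
    centralIndex q k ∣ k / natRadical k ∧
    centralIndex q k ^ 2 ∣ orderOf ((q : ZMod k)) ∧
    orderOf (((q : ZMod (k / centralIndex q k))) ^ centralIndex q k)
      = orderOf ((q : ZMod k)) / centralIndex q k ^ 2 := by
  have hq1 : 1 < q := hq ▸ Nat.one_lt_pow (by omega) hp.one_lt
  set τ := centralIndex q k
  have hτS : τ * τ ∣ subord q k := sq τ ▸ centralIndex_sq_dvd_subord hq1 hqk
  have hτ0 : τ ≠ 0 := fun h => subord_ne_zero hq1 hqk (by simpa [h] using hτS)
  have hτN : τ * τ ∣ orderOf (q : ZMod k) :=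
    hτS.trans (Dvd.intro _ (subord_mul_orderOf_natRadical q k))
  have hτ : τ ∣ subord q k := dvd_of_mul_right_dvd hτS
  refine ⟨hτ.trans (subord_dvd_div_natRadical hq1 hqk), sq τ ▸ hτN, ?_⟩
  have h2 : 2 ∣ τ → 2 ∣ subord q k / τ := fun h => h.trans (Nat.dvd_div_of_mul_dvd hτS)
  rw [orderOf_pow' _ hτ0, orderOf_natCast_div_of_dvd_subord hq1 hqk hτ h2,
    Nat.gcd_eq_right (Nat.dvd_div_of_mul_dvd hτN), Nat.div_div_eq_div_mul, sq]

/-- Let `q` be a prime power and `k ≥ 1` coprime to `q`, and let `τ_k` be the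
central index. Then `τ_k ∣ k / rad(k)`, `τ_k² ∣ ord_k(q)`, and
`ord_{k/τ_k}(q^{τ_k}) = ord_k(q) / τ_k²`. -/
theorem stmt_7 (p s q k : ℕ) (hp : p.Prime) (hq : q = p ^ s) (hs : 1 ≤ s)
    (hk : 1 ≤ k) (hqk : Nat.Coprime q k) :
    centralIndex q k ∣ k / natRadical k ∧
    centralIndex q k ^ 2 ∣ orderOf ((q : ZMod k)) ∧
    orderOf (((q : ZMod (k / centralIndex q k))) ^ centralIndex q k)
      = orderOf ((q : ZMod k)) / centralIndex q k ^ 2 :=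
  stmt_7_general p s q k hp hq hs hqk
end

section
/- Let E = F_{q^n} and h(x) ∈ F_{q^d}[x] a monic irreducible divisor of x^{n'/d} - 1 (where d | n' and n = p^a n', p ∤ n'). Let Γ be the group of additive characters χ of E whose F_{q^d}[x]-order divides h(x). Then for w ∈ E, the quantity (1/q^{d·deg h}) · [(q^{d·deg h}) · χ_0(w) − Σ_{χ ∈ Γ} χ(w)] equals 1 if h(x)^{p^a} divides the q^d-order of w, and 0 otherwise. -/
/-!
The Frobenius `σ : z ↦ z ^ Q` (`Q = |F|`) makes `E` an `F[X]`-module killed by `P = X ^ N - 1`,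
where `N = m p ^ a = [E : F]`. The kernel of `g(σ)` consists of roots of the linearized polynomial
`Σ aᵢ X ^ Q ^ i`, so it has dimension at most `deg g`; for a factorization `P = u v`, the inclusion
`im v(σ) ⊆ ker u(σ)` and rank–nullity then force `ker u(σ) = im v(σ)` and `dim ker u(σ) = deg u`.

The characters in `Γ` are those trivial on `M = im h(σ)`, so by orthogonality `Σ_{χ ∈ Γ} χ w` is
`|E ⧸ M| = Q ^ deg h` when `w ∈ M` and `0` otherwise. Since `p ∤ m`, `X ^ m - 1` is squarefree and
`h` divides `P = (X ^ m - 1) ^ p ^ a` exactly `p ^ a` times. Writing `P = h r`, we get `M = ker r(σ)`,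
and `w` is killed by some `g` with `h ^ p ^ a ∤ g` iff it is killed by `r`: for such `g`, `r` lies
in the ideal `(g, P)`.
-/

open Polynomial
open scoped Classical

noncomputable section

/-- The action of a polynomial `g ∈ F[x]` on `z ∈ E` through `x ↦ σ`, where
`σ : z ↦ z^Q` is the `Q`-power Frobenius (`Q = |F|`): `g(σ)(z) = Σᵢ aᵢ • z^{Q^i}`. -/
def polyAct {F E : Type*} [CommSemiring F] [CommRing E] [Algebra F E]
    (Q : ℕ) (g : F[X]) (z : E) : E :=
  g.sum fun i a => a • z ^ Q ^ i

open FiniteField Module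

theorem mem_span_pair_of_emultiplicity_eq {R : Type*} [CommRing R] [IsDomain R] [IsBezout R]
    {h r g : R} {k : ℕ} (hh : Prime h) (hk : emultiplicity h (h * r) = k) (hg : ¬ h ^ k ∣ g) :
    r ∈ Ideal.span {g, h * r} := by
  rw [← IsBezout.span_gcd, Ideal.mem_span_singleton]
  obtain ⟨e, he⟩ := IsBezout.gcd_dvd_right g (h * r)
  have hhe : h ∣ e := by
    by_contra hne
    have hke : h ^ k ∣ IsBezout.gcd g (h * r) * e := he ▸ (emultiplicity_eq_coe.mp hk).1
    exact hg ((hh.pow_dvd_of_dvd_mul_right k hne hke).trans (IsBezout.gcd_dvd_left g (h * r)))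
  obtain ⟨e', rfl⟩ := hhe
  exact ⟨e', mul_left_cancel₀ hh.ne_zero (by linear_combination he)⟩

theorem emultiplicity_X_pow_mul_sub_one {F : Type*} [Field F] (p : ℕ) [Fact p.Prime] [CharP F p]
    {m : ℕ} (hm : ¬ p ∣ m) (a : ℕ) {h : F[X]} (hh : Irreducible h) (hdvd : h ∣ X ^ m - 1) :
    emultiplicity h (X ^ (m * p ^ a) - 1 : F[X]) = (p ^ a : ℕ) := by
  have hm' : (m : F) ≠ 0 := by rwa [Ne, CharP.cast_eq_zero_iff F p]
  have hsq : Squarefree (X ^ m - 1 : F[X]) := by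
    simpa using (separable_X_pow_sub_C (1 : F) hm' one_ne_zero).squarefree
  have h1 : emultiplicity h (X ^ m - 1 : F[X]) = (1 : ℕ) :=
    emultiplicity_eq_coe.mpr ⟨by simpa using hdvd,
      fun h2 => hh.not_isUnit (hsq h (by simpa [sq] using h2))⟩
  rw [pow_mul, ← one_pow (p ^ a), ← sub_pow_char_pow, emultiplicity_pow hh.prime, h1]
  simp

section Exactness

variable {K V : Type*} [Field K] [AddCommGroup V] [Module K V] {T : Module.End K V} {P : K[X]}

theorem range_aeval_le_ker_aeval (hT : aeval T P = 0) {u v : K[X]} (huv : u * v = P) :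
    LinearMap.range (aeval T v) ≤ LinearMap.ker (aeval T u) := by
  rw [LinearMap.range_le_ker_iff, ← Module.End.mul_eq_comp, ← map_mul, huv, hT]

variable [FiniteDimensional K V] (hT : aeval T P = 0) (hP : P ≠ 0) (hn : P.natDegree = finrank K V)
  (hbound : ∀ g : K[X], g ≠ 0 → finrank K (LinearMap.ker (aeval T g)) ≤ g.natDegree)
include hT hP hn hbound

theorem finrank_ker_aeval_eq_natDegree {u v : K[X]} (huv : u * v = P) :
    finrank K (LinearMap.ker (aeval T u)) = u.natDegree := by
  have hu : u ≠ 0 := left_ne_zero_of_mul (huv ▸ hP)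
  have hv : v ≠ 0 := right_ne_zero_of_mul (huv ▸ hP)
  have hdeg := natDegree_mul hu hv
  rw [huv, hn] at hdeg
  have hrange := Submodule.finrank_mono (range_aeval_le_ker_aeval hT huv)
  have hrank := LinearMap.finrank_range_add_finrank_ker (aeval T v)
  have hboundu := hbound u hu
  have hboundv := hbound v hv
  omega

theorem ker_aeval_eq_range_aeval {u v : K[X]} (huv : u * v = P) :
    LinearMap.ker (aeval T u) = LinearMap.range (aeval T v) := by
  refine (Submodule.eq_of_le_of_finrank_le (range_aeval_le_ker_aeval hT huv) ?_).symm
  have hu := finrank_ker_aeval_eq_natDegree hT hP hn hbound huv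
  have hv := finrank_ker_aeval_eq_natDegree hT hP hn hbound ((mul_comm v u).trans huv)
  have hdeg := natDegree_mul (left_ne_zero_of_mul (huv ▸ hP)) (right_ne_zero_of_mul (huv ▸ hP))
  rw [huv, hn] at hdeg
  have hrank := LinearMap.finrank_range_add_finrank_ker (aeval T v)
  omega

theorem mem_range_aeval_iff_exists_annihilator {h r : K[X]} {k : ℕ} (hh : Prime h)
    (hr : P = h * r) (hk : emultiplicity h P = k) (w : V) :
    w ∈ LinearMap.range (aeval T h) ↔ ∃ g : K[X], aeval T g w = 0 ∧ ¬ h ^ k ∣ g := by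
  rw [← ker_aeval_eq_range_aeval hT hP hn hbound ((mul_comm r h).trans hr.symm), LinearMap.mem_ker]
  subst hr
  constructor
  · intro hw
    refine ⟨r, hw, fun hdvd => (emultiplicity_eq_coe.mp hk).2 ?_⟩
    rw [pow_succ']
    exact mul_dvd_mul_left h hdvd
  · rintro ⟨g, hgw, hg⟩
    obtain ⟨A, B, hAB⟩ := Ideal.mem_span_pair.mp (mem_span_pair_of_emultiplicity_eq hh hk hg)
    rw [← hAB, map_add, map_mul, map_mul, hT, mul_zero, add_zero, Module.End.mul_apply, hgw,
      map_zero]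

end Exactness

section Linearized

variable {F E : Type*} [CommSemiring F] [CommRing E] [Algebra F E]

def linearizedPoly (Q : ℕ) (g : F[X]) : E[X] :=
  g.sum fun i a => C (algebraMap F E a) * X ^ Q ^ i

theorem eval_linearizedPoly (Q : ℕ) (g : F[X]) (z : E) :
    (linearizedPoly Q g).eval z = polyAct Q g z := by
  simp [linearizedPoly, polyAct, Polynomial.sum_def, eval_finsetSum, Algebra.smul_def]

theorem coeff_linearizedPoly {Q : ℕ} (hQ : 1 < Q) (g : F[X]) (n : ℕ) :
    (linearizedPoly Q g : E[X]).coeff (Q ^ n) = algebraMap F E (g.coeff n) := by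
  simp only [linearizedPoly, Polynomial.sum_def, finsetSum_coeff, coeff_C_mul_X_pow,
    (Nat.pow_right_injective hQ).eq_iff, Finset.sum_ite_eq]
  split_ifs with hn
  · rfl
  · rw [notMem_support_iff.mp hn, map_zero]

theorem natDegree_linearizedPoly_le {Q : ℕ} (hQ : 0 < Q) (g : F[X]) :
    (linearizedPoly Q g : E[X]).natDegree ≤ Q ^ g.natDegree := by
  refine natDegree_sum_le_of_forall_le _ _ fun i hi => (natDegree_C_mul_X_pow_le _ _).trans ?_
  exact Nat.pow_le_pow_right hQ (le_natDegree_of_mem_supp i hi)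

end Linearized

section Frobenius

variable {F E : Type*} [Field F] [Fintype F] [Field E] [Algebra F E]

theorem frobeniusAlgHom_pow_apply (i : ℕ) (z : E) :
    ((frobeniusAlgHom F E).toLinearMap ^ i) z = z ^ Fintype.card F ^ i := by
  rw [Module.End.pow_apply, AlgHom.coe_toLinearMap, coe_frobeniusAlgHom, pow_iterate]

theorem polyAct_eq_aeval_frobeniusAlgHom (g : F[X]) (z : E) :
    polyAct (Fintype.card F) g z = aeval (frobeniusAlgHom F E).toLinearMap g z := by
  simp [polyAct, aeval_def, eval₂_eq_sum, Polynomial.sum_def, frobeniusAlgHom_pow_apply]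

variable [Fintype E]

theorem card_ker_aeval_frobeniusAlgHom_le {g : F[X]} (hg : g ≠ 0) :
    Nat.card (LinearMap.ker (aeval (frobeniusAlgHom F E).toLinearMap g)) ≤
      Fintype.card F ^ g.natDegree := by
  have hQ : 1 < Fintype.card F := Fintype.one_lt_card
  set L : E[X] := linearizedPoly (Fintype.card F) g with hLdef
  have hL : L ≠ 0 := by
    intro hL
    have hcoeff := coeff_linearizedPoly (E := E) hQ g g.natDegree
    rw [← hLdef, hL, coeff_zero, eq_comm, FaithfulSMul.algebraMap_eq_zero_iff, ← leadingCoeff,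
      leadingCoeff_eq_zero] at hcoeff
    exact hg hcoeff
  have hroots : (LinearMap.ker (aeval (frobeniusAlgHom F E).toLinearMap g) : Set E).toFinset.val
      ⊆ L.roots := by
    intro z hz
    rw [Finset.mem_val, Set.mem_toFinset, SetLike.mem_coe, LinearMap.mem_ker,
      ← polyAct_eq_aeval_frobeniusAlgHom, ← eval_linearizedPoly] at hz
    exact (mem_roots hL).mpr hz
  calc Nat.card (LinearMap.ker (aeval (frobeniusAlgHom F E).toLinearMap g))
      = (LinearMap.ker (aeval (frobeniusAlgHom F E).toLinearMap g) : Set E).toFinset.card :=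
        Nat.card_eq_card_toFinset _
    _ ≤ L.natDegree := card_le_degree_of_subset_roots hroots
    _ ≤ Fintype.card F ^ g.natDegree := natDegree_linearizedPoly_le (by omega) g

theorem finrank_ker_aeval_frobeniusAlgHom_le {g : F[X]} (hg : g ≠ 0) :
    finrank F (LinearMap.ker (aeval (frobeniusAlgHom F E).toLinearMap g)) ≤ g.natDegree := by
  have := card_ker_aeval_frobeniusAlgHom_le (E := E) hg
  rw [Module.natCard_eq_pow_finrank (K := F), Nat.card_eq_fintype_card (α := F)] at this
  exact (Nat.pow_le_pow_iff_right Fintype.one_lt_card).mp this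

variable {N : ℕ} (hcard : Fintype.card E = Fintype.card F ^ N)
include hcard

theorem aeval_frobeniusAlgHom_X_pow_sub_one :
    aeval (frobeniusAlgHom F E).toLinearMap (X ^ N - 1 : F[X]) = 0 := by
  ext z
  simp [frobeniusAlgHom_pow_apply, ← hcard, FiniteField.pow_card]

theorem finrank_eq_of_card_eq : finrank F E = N :=
  Nat.pow_right_injective Fintype.one_lt_card (Module.card_eq_pow_finrank.symm.trans hcard)

theorem natDegree_X_pow_sub_one_eq_finrank : (X ^ N - 1 : F[X]).natDegree = finrank F E := by
  rw [← C_1, natDegree_X_pow_sub_C, finrank_eq_of_card_eq hcard]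

theorem X_pow_sub_one_ne_zero_of_card_eq : (X ^ N - 1 : F[X]) ≠ 0 :=
  X_pow_sub_C_ne_zero (finrank_eq_of_card_eq hcard ▸ Module.finrank_pos) 1

theorem natCard_quotient_range_aeval_frobeniusAlgHom {u v : F[X]} (huv : u * v = X ^ N - 1) :
    Nat.card (E ⧸ (aeval (frobeniusAlgHom F E).toLinearMap u).toAddMonoidHom.range) =
      Fintype.card F ^ u.natDegree := by
  rw [← AddSubgroup.index_eq_card, AddSubgroup.index_range,
    ← finrank_ker_aeval_eq_natDegree (aeval_frobeniusAlgHom_X_pow_sub_one hcard)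
      (X_pow_sub_one_ne_zero_of_card_eq hcard) (natDegree_X_pow_sub_one_eq_finrank hcard)
      (fun _ => finrank_ker_aeval_frobeniusAlgHom_le) huv,
    ← Nat.card_eq_fintype_card]
  exact Module.natCard_eq_pow_finrank (V := LinearMap.ker (aeval _ u))

theorem mem_range_aeval_frobeniusAlgHom_iff {h r : F[X]} {k : ℕ} (hh : Prime h)
    (hr : X ^ N - 1 = h * r) (hk : emultiplicity h (X ^ N - 1 : F[X]) = k) (w : E) :
    w ∈ (aeval (frobeniusAlgHom F E).toLinearMap h).toAddMonoidHom.range ↔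
      ∃ g : F[X], polyAct (Fintype.card F) g w = 0 ∧ ¬ h ^ k ∣ g := by
  simp only [polyAct_eq_aeval_frobeniusAlgHom]
  exact mem_range_aeval_iff_exists_annihilator (aeval_frobeniusAlgHom_X_pow_sub_one hcard)
    (X_pow_sub_one_ne_zero_of_card_eq hcard) (natDegree_X_pow_sub_one_eq_finrank hcard)
    (fun _ => finrank_ker_aeval_frobeniusAlgHom_le) hh hr hk w

end Frobenius

section Characters

variable {G : Type*} [AddCommGroup G] (M : AddSubgroup G)

theorem setOf_addChar_eq_one_on_eq_range :
    {χ : AddChar G ℂ | ∀ y ∈ M, χ y = 1} =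
      Set.range fun ψ : AddChar (G ⧸ M) ℂ => ψ.compAddMonoidHom (QuotientAddGroup.mk' M) := by
  ext χ
  constructor
  · intro hχ
    have hker : M ≤ (AddChar.toAddMonoidHomEquiv χ).ker := fun y hy => by
      simp [hχ y hy]
    refine ⟨AddChar.toAddMonoidHomEquiv.symm
      (QuotientAddGroup.lift M (AddChar.toAddMonoidHomEquiv χ) hker), ?_⟩
    ext x
    simp
  · rintro ⟨ψ, rfl⟩ y hy
    simp [(QuotientAddGroup.eq_zero_iff y).mpr hy]

theorem finsum_mem_addChar_eq_one_on_apply [Fintype G] (w : G) :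
    ∑ᶠ χ ∈ {χ : AddChar G ℂ | ∀ y ∈ M, χ y = 1}, χ w
      = if w ∈ M then (Nat.card (G ⧸ M) : ℂ) else 0 := by
  rw [setOf_addChar_eq_one_on_eq_range, finsum_mem_range
    (AddChar.compAddMonoidHom_injective_left _ (QuotientAddGroup.mk'_surjective M)),
    finsum_eq_sum_of_fintype]
  simp only [AddChar.compAddMonoidHom_apply, QuotientAddGroup.mk'_apply,
    AddChar.sum_apply_eq_ite, QuotientAddGroup.eq_zero_iff, Nat.card_eq_fintype_card]

end Characters

theorem stmt_8_general (F E : Type*) [Field F] [Fintype F] [Field E] [Fintype E]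
    [Algebra F E] (p : ℕ) [Fact p.Prime] [CharP E p]
    (a m : ℕ) (hm : ¬ p ∣ m)
    (hcard : Fintype.card E = Fintype.card F ^ (m * p ^ a))
    (h : F[X]) (hirr : Irreducible h)
    (hdvd : h ∣ X ^ m - 1)
    (Γ : Set (AddChar E ℂ))
    (hΓ : Γ = {χ : AddChar E ℂ | ∀ z : E, χ (polyAct (Fintype.card F) h z) = 1}) :
    ∀ w : E,
      ((Fintype.card F : ℂ) ^ h.natDegree)⁻¹ *
          ((Fintype.card F : ℂ) ^ h.natDegree - ∑ᶠ χ ∈ Γ, χ w)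
        = if (∀ g : F[X], g ≠ 0 → polyAct (Fintype.card F) g w = 0 → h ^ p ^ a ∣ g)
          then 1 else 0 := by
  intro w
  have : CharP F p := (Algebra.charP_iff F E p).mpr ‹_›
  have hk := emultiplicity_X_pow_mul_sub_one p hm a hirr hdvd
  obtain ⟨r, hr⟩ : h ∣ X ^ (m * p ^ a) - 1 :=
    (dvd_pow_self h (pow_ne_zero _ (Fact.out : p.Prime).ne_zero)).trans
      (emultiplicity_eq_coe.mp hk).1
  set M := (aeval (frobeniusAlgHom F E).toLinearMap h).toAddMonoidHom.range
  have hΓM : Γ = {χ : AddChar E ℂ | ∀ y ∈ M, χ y = 1} := by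
    simp [hΓ, M, polyAct_eq_aeval_frobeniusAlgHom]
  have hmem : w ∈ M ↔ ¬ ∀ g : F[X], g ≠ 0 → polyAct (Fintype.card F) g w = 0 → h ^ p ^ a ∣ g := by
    rw [mem_range_aeval_frobeniusAlgHom_iff hcard hirr.prime hr hk]
    simp only [not_forall, exists_prop]
    exact ⟨fun ⟨g, hgw, hg⟩ => ⟨g, fun h0 => hg (h0 ▸ dvd_zero _), hgw, hg⟩,
      fun ⟨g, _, hgw, hg⟩ => ⟨g, hgw, hg⟩⟩
  have hQ : (Fintype.card F : ℂ) ^ h.natDegree ≠ 0 := by simp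
  rw [hΓM, finsum_mem_addChar_eq_one_on_apply,
    natCard_quotient_range_aeval_frobeniusAlgHom hcard hr.symm]
  by_cases hw : w ∈ M
  · simp [hw, ← hmem]
  · rw [if_neg hw, if_pos (not_not.mp (mt hmem.mpr hw)), sub_zero, inv_mul_cancel₀ hQ]

/-- Let `E = 𝔽_{q^n}`, `F = 𝔽_{q^d}` with `n = d · m · p^a`, `p ∤ m`, and let
`h ∈ F[x]` be a monic irreducible divisor of `x^m − 1`.  Let `Γ` be the group of
additive characters of `E` whose `F[x]`-order divides `h`.  Then for `w ∈ E`, the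
quantity `(1/q^{d·deg h}) · (q^{d·deg h}·χ₀(w) − Σ_{χ ∈ Γ} χ(w))` equals `1` if
`h^{p^a}` divides the `q^d`-order of `w`, and `0` otherwise. -/
theorem stmt_8 (F E : Type*) [Field F] [Fintype F] [Field E] [Fintype E]
    [Algebra F E] (p : ℕ) [Fact p.Prime] [CharP E p]
    (a m : ℕ) (hm : ¬ p ∣ m) (hm0 : 0 < m)
    (hcard : Fintype.card E = Fintype.card F ^ (m * p ^ a))
    (h : F[X]) (hmonic : h.Monic) (hirr : Irreducible h)
    (hdvd : h ∣ X ^ m - 1)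
    (Γ : Set (AddChar E ℂ))
    (hΓ : Γ = {χ : AddChar E ℂ | ∀ z : E, χ (polyAct (Fintype.card F) h z) = 1}) :
    ∀ w : E,
      ((Fintype.card F : ℂ) ^ h.natDegree)⁻¹ *
          ((Fintype.card F : ℂ) ^ h.natDegree - ∑ᶠ χ ∈ Γ, χ w)
        = if (∀ g : F[X], g ≠ 0 → polyAct (Fintype.card F) g w = 0 → h ^ p ^ a ∣ g)
          then 1 else 0 :=
  stmt_8_general F E p a m hm hcard h hirr hdvd Γ hΓ

end
end

section
/- Let Q be a prime power, K = F_Q, L = F_{Q^2}, and let E be an extension field of L carrying the Frobenius S: z ↦ z^Q. Let f(y) ∈ K[y] be monic irreducible of degree δ such that f(x^2) ∈ K[x] splits over K into two distinct irreducibles g_1, g_2 and f splits over L into two distinct irreducibles h_1, h_2. Suppose w ∈ E is annihilated by f(S^2)^{p^a} and its Q^2-order (as L[y]-module via S^2) equals h_1^α · h_2^β with β < α ≤ p^a. Then the Q-order of w (as K[x]-module via S) equals f(x^2)^α. -/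
/-!
`f(x²)^α` acts on `w` as `(h₁h₂)^α (S²)`, a multiple of the `Q²`-order, so it kills `w`.
Conversely write `q ∈ K[x]` as `q_e(x²) + x·q_o(x²)` and let `M, N ∈ L[y]` be the images of
`q_e, q_o`. Since `x²` acts as `S²`, `q(S) w = 0` says `M(S²) w = -S (N(S²) w)`. Moving `S` past an
`L`-polynomial in `S²` conjugates its coefficients by the Frobenius `σ` of `L/K`, which swaps
`h₁` and `h₂`; so `h₁^α h₂^β ∣ c M ↔ h₁^α h₂^β ∣ σ(c) N` for every `c`. As `M, N` are
`σ`-invariant, their `h₁`- and `h₂`-valuations agree, and testing `c = h₁^i h₂^j` with `β < α`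
forces `(h₁ h₂)^α ∣ M, N`, i.e. `f^α ∣ q_e, q_o`.
-/

open Polynomial

noncomputable section

/-- `g` is the `F`-order of `w` (w.r.t. the `Q`-power Frobenius): the monic
generator of the annihilator of `w` in `F[x]`. -/
def IsPolyOrd {F E : Type*} [CommSemiring F] [CommRing E] [Algebra F E]
    (Q : ℕ) (g : F[X]) (w : E) : Prop :=
  g.Monic ∧ polyAct Q g w = 0 ∧ ∀ f : F[X], polyAct Q f w = 0 → g ∣ f

theorem ENat.le_of_forall_iff_swap {α β : ℕ} (hβα : β < α) {A C : ℕ∞}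
    (h : ∀ i j : ℕ, (α ≤ i + A ∧ β ≤ j + A) ↔ (α ≤ j + C ∧ β ≤ i + C)) :
    ↑α ≤ A ∧ ↑α ≤ C := by
  induction A using ENat.recTopCoe with
  | top =>
    induction C using ENat.recTopCoe with
    | top => simp
    | coe C =>
      have := (h 0 0).1 (by simp)
      norm_cast at this
      exact ⟨le_top, by exact_mod_cast (zero_add C ▸ this.1)⟩
  | coe A =>
    induction C using ENat.recTopCoe with
    | top =>
      have := (h 0 0).2 (by simp)
      norm_cast at this
      exact ⟨by exact_mod_cast (zero_add A ▸ this.1), le_top⟩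
    | coe C =>
      have h₁ := (h (α - A) (β - A)).1 (by norm_cast; omega)
      have h₂ := (h (β - C) (α - C)).2 (by norm_cast; omega)
      norm_cast at h₁ h₂ ⊢
      omega

section SwappedPrimes

variable {R : Type*} [CommRing R] [IsDomain R] {p₁ p₂ : R}

theorem pow_mul_pow_dvd_iff_le_emultiplicity (hp₁ : Prime p₁) (hp₂ : Prime p₂)
    (hcop : IsCoprime p₁ p₂) (α β i j : ℕ) (x : R) :
    p₁ ^ α * p₂ ^ β ∣ p₁ ^ i * p₂ ^ j * x ↔
      (α ≤ i + emultiplicity p₁ x ∧ β ≤ j + emultiplicity p₂ x) := by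
  have h₁₂ : ¬ p₁ ∣ p₂ ^ j := fun h =>
    hp₁.not_isUnit (hcop.isUnit_of_dvd' dvd_rfl (hp₁.dvd_of_dvd_pow h))
  have h₂₁ : ¬ p₂ ∣ p₁ ^ i := fun h =>
    hp₂.not_isUnit (hcop.isUnit_of_dvd' (hp₂.dvd_of_dvd_pow h) dvd_rfl)
  have e₁ : emultiplicity p₁ (p₁ ^ i * p₂ ^ j * x) = i + emultiplicity p₁ x := by
    rw [emultiplicity_mul hp₁, emultiplicity_mul hp₁, emultiplicity_pow_self_of_prime hp₁,
      emultiplicity_eq_zero.2 h₁₂, add_zero]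
  have e₂ : emultiplicity p₂ (p₁ ^ i * p₂ ^ j * x) = j + emultiplicity p₂ x := by
    rw [emultiplicity_mul hp₂, emultiplicity_mul hp₂, emultiplicity_pow_self_of_prime hp₂,
      emultiplicity_eq_zero.2 h₂₁, zero_add]
  rw [← e₁, ← e₂, ← pow_dvd_iff_le_emultiplicity, ← pow_dvd_iff_le_emultiplicity]
  exact ⟨fun h => ⟨dvd_of_mul_right_dvd h, dvd_of_mul_left_dvd h⟩,
    fun ⟨h₁, h₂⟩ => hcop.pow.mul_dvd h₁ h₂⟩

theorem pow_dvd_of_forall_dvd_mul_iff_dvd_map_mul {G : Type*} [EquivLike G R R]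
    [MulEquivClass G R R] (σ : G) (hp₁ : Prime p₁) (hp₂ : Prime p₂)
    (hcop : IsCoprime p₁ p₂) (hσ₁ : σ p₁ = p₂) (hσ₂ : σ p₂ = p₁) {M N : R} (hM : σ M = M)
    (hN : σ N = N) {α β : ℕ} (hβα : β < α)
    (h : ∀ c, p₁ ^ α * p₂ ^ β ∣ c * M ↔ p₁ ^ α * p₂ ^ β ∣ σ c * N) :
    (p₁ * p₂) ^ α ∣ M ∧ (p₁ * p₂) ^ α ∣ N := by
  have hv : ∀ x, σ x = x → emultiplicity p₂ x = emultiplicity p₁ x := fun x hx => by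
    rw [← hσ₁, ← hx, emultiplicity_map_eq, hx]
  obtain ⟨hαM, hαN⟩ := ENat.le_of_forall_iff_swap hβα (A := emultiplicity p₁ M)
    (C := emultiplicity p₁ N) fun i j => by
      have := h (p₁ ^ i * p₂ ^ j)
      rwa [map_mul, map_pow, map_pow, hσ₁, hσ₂, mul_comm (p₂ ^ i),
        pow_mul_pow_dvd_iff_le_emultiplicity hp₁ hp₂ hcop,
        pow_mul_pow_dvd_iff_le_emultiplicity hp₁ hp₂ hcop, hv M hM, hv N hN] at this
  have hdvd : ∀ x, σ x = x → ↑α ≤ emultiplicity p₁ x → (p₁ * p₂) ^ α ∣ x := fun x hx hα => by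
    rw [mul_pow]
    refine hcop.pow.mul_dvd (pow_dvd_iff_le_emultiplicity.2 hα) ?_
    rwa [pow_dvd_iff_le_emultiplicity, hv x hx]
  exact ⟨hdvd M hM hαM, hdvd N hN hαN⟩

end SwappedPrimes

section PolyAct

variable {F E : Type*} [CommRing E]

section Semiring

variable [CommSemiring F] [Algebra F E]

theorem polyAct_add (Q : ℕ) (u v : F[X]) (z : E) :
    polyAct Q (u + v) z = polyAct Q u z + polyAct Q v z :=
  Polynomial.sum_add_index _ _ _ (fun _ => by simp) fun _ _ _ => add_smul _ _ _

theorem polyAct_monomial (Q n : ℕ) (a : F) (z : E) :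
    polyAct Q (monomial n a) z = a • z ^ Q ^ n :=
  Polynomial.sum_monomial_index _ _ (by simp)

theorem polyAct_X (Q : ℕ) (z : E) : polyAct Q (X : F[X]) z = z ^ Q := by
  rw [← monomial_one_one_eq_X, polyAct_monomial, one_smul, pow_one]

theorem polyAct_expand {K L : Type*} [CommSemiring K] [CommSemiring L] [Algebra K L]
    [Algebra K E] [Algebra L E] [IsScalarTower K L E] (Q k : ℕ) (u : K[X]) (z : E) :
    polyAct Q (expand K k u) z = polyAct (Q ^ k) (u.map (algebraMap K L)) z := by
  induction u using Polynomial.induction_on' with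
  | add u v hu hv => rw [map_add, Polynomial.map_add, polyAct_add, polyAct_add, hu, hv]
  | monomial n a =>
    rw [expand_monomial, Polynomial.map_monomial, polyAct_monomial, polyAct_monomial,
      algebraMap_smul, ← pow_mul, mul_comm]

theorem polyAct_map_ringHom (Q : ℕ) (S : E →+* E) (φ : F →+* F)
    (hS : ∀ a z, S (φ a • z) = a • S z) (c : F[X]) (z : E) :
    polyAct Q c (S z) = S (polyAct Q (c.map φ) z) := by
  induction c using Polynomial.induction_on' with
  | add u v hu hv => rw [Polynomial.map_add, polyAct_add, polyAct_add, hu, hv, map_add]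
  | monomial n a => rw [Polynomial.map_monomial, polyAct_monomial, polyAct_monomial, hS, map_pow]

end Semiring

variable [Field F] [Fintype F] [Algebra F E]

theorem polyAct_card_eq_aeval (g : F[X]) (z : E) :
    polyAct (Fintype.card F) g z = aeval (FiniteField.frobeniusAlgHom F E).toLinearMap g z := by
  rw [aeval_eq_sum_range, LinearMap.sum_apply, polyAct, Polynomial.sum_over_range]
  · refine Finset.sum_congr rfl fun i _ => ?_
    rw [LinearMap.smul_apply, Module.End.pow_apply, AlgHom.coe_toLinearMap,
      FiniteField.coe_frobeniusAlgHom, pow_iterate]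
  · simp

theorem polyAct_card_mul (u v : F[X]) (z : E) :
    polyAct (Fintype.card F) (u * v) z =
      polyAct (Fintype.card F) u (polyAct (Fintype.card F) v z) := by
  simp only [polyAct_card_eq_aeval, map_mul, Module.End.mul_apply]

theorem polyAct_card_neg (g : F[X]) (z : E) :
    polyAct (Fintype.card F) g (-z) = -polyAct (Fintype.card F) g z := by
  simp only [polyAct_card_eq_aeval, map_neg]

theorem polyAct_card_zero (g : F[X]) : polyAct (Fintype.card F) g (0 : E) = 0 := by
  simp only [polyAct_card_eq_aeval, map_zero]

theorem IsPolyOrd.polyAct_eq_zero_iff {n : F[X]} {w : E} (hn : IsPolyOrd (Fintype.card F) n w)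
    (c : F[X]) : polyAct (Fintype.card F) c w = 0 ↔ n ∣ c := by
  refine ⟨hn.2.2 c, ?_⟩
  rintro ⟨d, rfl⟩
  rw [mul_comm, polyAct_card_mul, hn.2.1, polyAct_card_zero]

end PolyAct

theorem Polynomial.mapAlgEquiv_map_algebraMap {K L : Type*} [CommSemiring K] [Semiring L]
    [Algebra K L] (σ : L ≃ₐ[K] L) (u : K[X]) :
    mapAlgEquiv σ (u.map (algebraMap K L)) = u.map (algebraMap K L) := by
  rw [coe_mapAlgEquiv, map_map, show (σ : L →+* L).comp (algebraMap K L) = _ from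
    RingHom.ext σ.commutes]

namespace FiniteField

variable {K L : Type*} [Field K] [Fintype K] [Field L] [Finite L] [Algebra K L]

theorem mem_range_algebraMap_of_pow_card_eq {x : L} (hx : x ^ Fintype.card K = x) :
    x ∈ Set.range (algebraMap K L) := by
  refine (IsGalois.mem_range_algebraMap_iff_fixed x).2 fun τ => ?_
  obtain ⟨n, rfl⟩ := (bijective_frobeniusAlgEquivOfAlgebraic_pow K L).2 τ
  rw [AlgEquiv.coe_pow, coe_frobeniusAlgEquivOfAlgebraic]
  exact Function.iterate_fixed hx _

theorem lifts_of_map_frobenius_eq {c : L[X]}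
    (hc : c.map (frobeniusAlgEquivOfAlgebraic K L : L →+* L) = c) :
    c ∈ lifts (algebraMap K L) :=
  (lifts_iff_coeff_lifts c).2 fun n => mem_range_algebraMap_of_pow_card_eq <| by
    simpa using congrArg (coeff · n) hc

theorem map_frobenius_eq_of_map_eq_mul {f : K[X]} (hf : Irreducible f) {h₁ h₂ : L[X]}
    (hh : f.map (algebraMap K L) = h₁ * h₂) (hh₁ : h₁.Monic) (hh₂ : h₂.Monic)
    (hh₁irr : Irreducible h₁) (hh₂irr : Irreducible h₂) :
    h₁.map (frobeniusAlgEquivOfAlgebraic K L : L →+* L) = h₂ := by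
  set σ := frobeniusAlgEquivOfAlgebraic K L
  have hσh₁ : Irreducible (h₁.map (σ : L →+* L)) :=
    (MulEquiv.irreducible_iff (mapAlgEquiv σ)).2 hh₁irr
  have hdvd : h₁.map (σ : L →+* L) ∣ h₁ * h₂ := by
    rw [← hh, ← mapAlgEquiv_map_algebraMap σ, coe_mapAlgEquiv, hh]
    exact Polynomial.map_dvd _ (dvd_mul_right h₁ h₂)
  have heq : ∀ h, h.Monic → Irreducible h → h₁.map (σ : L →+* L) ∣ h →
      h₁.map (σ : L →+* L) = h := fun h hm hirr hd =>
    eq_of_monic_of_associated (hh₁.map _) hm (hσh₁.associated_of_dvd hirr hd)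
  rcases hσh₁.prime.dvd_or_dvd hdvd with hd | hd
  · exfalso
    obtain ⟨k, hk, -, hkm⟩ := lifts_and_natDegree_eq_and_monic
      (lifts_of_map_frobenius_eq (heq h₁ hh₁ hh₁irr hd)) hh₁
    have hkf : k ∣ f := by
      rw [← map_dvd_map _ (algebraMap K L).injective hkm, hk, hh]
      exact dvd_mul_right h₁ h₂
    rcases hf.dvd_iff.1 hkf with hu | hassoc
    · exact hh₁irr.not_isUnit (hk ▸ hu.map (mapRingHom (algebraMap K L)))
    · have : h₁ * h₂ ∣ h₁ * 1 := by
        simpa [hh, hk] using Polynomial.map_dvd (algebraMap K L) hassoc.dvd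
      exact hh₂irr.not_isUnit (isUnit_of_dvd_one ((mul_dvd_mul_iff_left hh₁.ne_zero).1 this))
  · exact heq h₂ hh₂ hh₂irr hd

theorem frobeniusAlgEquivOfAlgebraic_smul_pow_card [Fintype L] {E : Type*} [CommRing E]
    [Algebra L E] (hL : Fintype.card L = Fintype.card K ^ 2) (b : L) (z : E) :
    (frobeniusAlgEquivOfAlgebraic K L b • z) ^ Fintype.card K = b • z ^ Fintype.card K := by
  rw [_root_.smul_pow, coe_frobeniusAlgEquivOfAlgebraic, ← pow_mul, ← sq, ← hL, pow_card]

end FiniteField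

theorem Polynomial.exists_eq_expand_two_add_X_mul_expand_two {R : Type*} [CommSemiring R]
    (q : R[X]) : ∃ a b : R[X], q = expand R 2 a + X * expand R 2 b := by
  induction q using Polynomial.induction_on' with
  | add q r hq hr =>
    obtain ⟨a, b, rfl⟩ := hq
    obtain ⟨c, d, rfl⟩ := hr
    exact ⟨a + c, b + d, by rw [map_add, map_add]; ring⟩
  | monomial n c =>
    rcases Nat.even_or_odd' n with ⟨m, rfl | rfl⟩
    · exact ⟨monomial m c, 0, by rw [map_zero, mul_zero, add_zero, expand_monomial, mul_comm]⟩
    · exact ⟨0, monomial m c, by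
        rw [map_zero, zero_add, expand_monomial, X_mul_monomial, mul_comm]⟩

section QuadraticExtension

open FiniteField

variable {K L E : Type*} [Field K] [Fintype K] [Field L] [Fintype L] [Algebra K L]

theorem polyAct_expand_two_add_X_mul_expand_two [CommRing E] [Algebra K E] [Algebra L E]
    [IsScalarTower K L E]
    (hL : Fintype.card L = Fintype.card K ^ 2) (a b : K[X]) (z : E) :
    polyAct (Fintype.card K) (expand K 2 a + X * expand K 2 b) z =
      polyAct (Fintype.card L) (a.map (algebraMap K L)) z +
        polyAct (Fintype.card L) (b.map (algebraMap K L)) z ^ Fintype.card K := by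
  rw [polyAct_add, polyAct_card_mul, polyAct_X, polyAct_expand (L := L),
    polyAct_expand (L := L), hL]

theorem dvd_mul_iff_dvd_map_frobenius_mul [Field E] [Algebra K E] [Algebra L E]
    (hL : Fintype.card L = Fintype.card K ^ 2)
    {n M N : L[X]} {w : E} (hw : IsPolyOrd (Fintype.card L) n w)
    (hMN : polyAct (Fintype.card L) M w + polyAct (Fintype.card L) N w ^ Fintype.card K = 0)
    (c : L[X]) :
    n ∣ c * M ↔ n ∣ mapAlgEquiv (frobeniusAlgEquivOfAlgebraic K L) c * N := by
  let S : E →+* E := (frobeniusAlgHom K E).toRingHom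
  have hM : polyAct (Fintype.card L) M w = -S (polyAct (Fintype.card L) N w) :=
    eq_neg_of_add_eq_zero_left hMN
  rw [← hw.polyAct_eq_zero_iff, ← hw.polyAct_eq_zero_iff, coe_mapAlgEquiv, polyAct_card_mul,
    polyAct_card_mul, hM, polyAct_card_neg,
    polyAct_map_ringHom _ S (frobeniusAlgEquivOfAlgebraic K L)
      (frobeniusAlgEquivOfAlgebraic_smul_pow_card hL), neg_eq_zero,
    map_eq_zero_iff S S.injective]

end QuadraticExtension

open FiniteField in
theorem stmt_9_general (K L E : Type*) [Field K] [Fintype K] [Field L] [Fintype L]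
    [Field E] [Algebra K L] [Algebra K E] [Algebra L E]
    [IsScalarTower K L E]
    (Q : ℕ) (hQ : Q = Fintype.card K) (hL : Fintype.card L = Q ^ 2)
    (f : K[X]) (hf : f.Monic) (hfirr : Irreducible f)
    (h₁ h₂ : L[X]) (hh : f.map (algebraMap K L) = h₁ * h₂)
    (hh₁ : h₁.Monic) (hh₂ : h₂.Monic)
    (hh₁irr : Irreducible h₁) (hh₂irr : Irreducible h₂) (hhne : h₁ ≠ h₂)
    (α β : ℕ) (hβα : β < α)
    (w : E)
    (hord : IsPolyOrd (Q ^ 2) (h₁ ^ α * h₂ ^ β) w) :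
    IsPolyOrd Q ((expand K 2 f) ^ α) w := by
  subst hQ
  rw [← hL] at hord
  set σ := frobeniusAlgEquivOfAlgebraic K L
  have hσh₁ : mapAlgEquiv σ h₁ = h₂ := map_frobenius_eq_of_map_eq_mul hfirr hh hh₁ hh₂ hh₁irr hh₂irr
  have hσh₂ : mapAlgEquiv σ h₂ = h₁ :=
    map_frobenius_eq_of_map_eq_mul hfirr (hh.trans (mul_comm _ _)) hh₂ hh₁ hh₂irr hh₁irr
  have hcop : IsCoprime h₁ h₂ := hh₁irr.coprime_iff_not_dvd.2 fun hd =>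
    hhne (eq_of_monic_of_associated hh₁ hh₂ (hh₁irr.associated_of_dvd hh₂irr hd))
  have hdvd : ∀ u : K[X], (h₁ * h₂) ^ α ∣ u.map (algebraMap K L) →
      expand K 2 f ^ α ∣ expand K 2 u := fun u hu => by
    rw [← hh, ← Polynomial.map_pow, map_dvd_map _ (algebraMap K L).injective (hf.pow α)] at hu
    rw [← map_pow]
    exact _root_.map_dvd _ hu
  refine ⟨(hf.expand two_pos).pow α, ?_, fun q hq => ?_⟩
  · rw [← map_pow, polyAct_expand (L := L), ← hL, hord.polyAct_eq_zero_iff, Polynomial.map_pow,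
      hh, mul_pow]
    exact mul_dvd_mul_left _ (pow_dvd_pow _ hβα.le)
  obtain ⟨qe, qo, rfl⟩ := exists_eq_expand_two_add_X_mul_expand_two q
  rw [polyAct_expand_two_add_X_mul_expand_two hL] at hq
  obtain ⟨hM, hN⟩ := pow_dvd_of_forall_dvd_mul_iff_dvd_map_mul (mapAlgEquiv σ) hh₁irr.prime
    hh₂irr.prime hcop hσh₁ hσh₂ (mapAlgEquiv_map_algebraMap σ qe)
    (mapAlgEquiv_map_algebraMap σ qo) hβα (dvd_mul_iff_dvd_map_frobenius_mul hL hord hq)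
  exact dvd_add (hdvd qe hM) (dvd_mul_of_dvd_right (hdvd qo hN) X)

/-- Let `K = 𝔽_Q`, `L = 𝔽_{Q²}`, `E ⊇ L` finite with Frobenius `S : z ↦ z^Q`.
Let `f ∈ K[y]` be monic irreducible such that `f(x²)` splits over `K` into two
distinct monic irreducibles `g₁, g₂` and `f` splits over `L` into two distinct
monic irreducibles `h₁, h₂`.  If `w ∈ E` is annihilated by `f(S²)^{p^a}` and its
`Q²`-order equals `h₁^α · h₂^β` with `β < α ≤ p^a`, then its `Q`-order equals
`f(x²)^α`. -/
theorem stmt_9 (K L E : Type*) [Field K] [Fintype K] [Field L] [Fintype L]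
    [Field E] [Fintype E] [Algebra K L] [Algebra K E] [Algebra L E]
    [IsScalarTower K L E]
    (p : ℕ) [Fact p.Prime] [CharP K p]
    (Q : ℕ) (hQ : Q = Fintype.card K) (hL : Fintype.card L = Q ^ 2)
    (f : K[X]) (hf : f.Monic) (hfirr : Irreducible f)
    (g₁ g₂ : K[X]) (hg : expand K 2 f = g₁ * g₂)
    (hg₁ : g₁.Monic) (hg₂ : g₂.Monic)
    (hg₁irr : Irreducible g₁) (hg₂irr : Irreducible g₂) (hgne : g₁ ≠ g₂)
    (h₁ h₂ : L[X]) (hh : f.map (algebraMap K L) = h₁ * h₂)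
    (hh₁ : h₁.Monic) (hh₂ : h₂.Monic)
    (hh₁irr : Irreducible h₁) (hh₂irr : Irreducible h₂) (hhne : h₁ ≠ h₂)
    (a α β : ℕ) (hβα : β < α) (hα : α ≤ p ^ a)
    (w : E) (hann : polyAct Q ((expand K 2 f) ^ p ^ a) w = 0)
    (hord : IsPolyOrd (Q ^ 2) (h₁ ^ α * h₂ ^ β) w) :
    IsPolyOrd Q ((expand K 2 f) ^ α) w :=
  stmt_9_general K L E Q hQ hL f hf hfirr h₁ h₂ hh hh₁ hh₂ hh₁irr hh₂irr hhne α β hβα w hord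

end
end
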